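/- arXiv:1910.13306 — 8 statements merged into one kernel-verified Lean document; each statement's English description precedes it below -/
import Mathlib

section
/- Fix natural numbers n_j, n_ℓ, n_p ≤ n_j, n_m, a real n_j×n_ℓ matrix A, a real (n_j−n_p)×n_j matrix C̄, and for each pipe index j ∈ {1,…,n_ℓ} a twice continuously differentiable function q_j : ℝ×ℝ → ℝ. For each measurement set i ∈ {1,…,n_m} fix constant vectors κ⁽ⁱ⁾ ∈ ℝ^{n_ℓ} and q̄⁽ⁱ⁾ ∈ ℝ^{n_j}. For a variable x = (ε, h⁽¹⁾,…,h⁽ⁿᵐ⁾) with ε ∈ ℝ^{n_ℓ} and h⁽ⁱ⁾ ∈ ℝ^{n_j−n_p}, set Δh⁽ⁱ⁾ = κ⁽ⁱ⁾ − AᵀC̄ᵀh⁽ⁱ⁾, define the flow vector x_Q⁽ⁱ⁾(x) ∈ ℝ^{n_ℓ} by its components q_j(ε_j, Δh⁽ⁱ⁾_j), and define the residual blocks f⁽ⁱ⁾(x) = A·x_Q⁽ⁱ⁾(x) − q̄⁽ⁱ⁾, stacked into f(x) ∈ ℝ^{n_m·n_j}. Let p_ε⁽ⁱ⁾, p_{Δh}⁽ⁱ⁾,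 p_{ε²}⁽ⁱ⁾, p_{εΔh}⁽ⁱ⁾, p_{Δh²}⁽ⁱ⁾ ∈ ℝ^{n_ℓ} denote the vectors whose j-th entries are ∂q_j/∂ε, ∂q_j/∂Δh, ∂²q_j/∂ε², ∂²q_j/∂ε∂Δh, ∂²q_j/∂Δh² evaluated at (ε_j, Δh⁽ⁱ⁾_j). Let c_l ∈ ℝ^{n_ℓ} be such that L = A·diag(c_l)·Aᵀ is invertible. Then for every point x and every direction d = (d_ε, d_h⁽¹⁾,…,d_h⁽ⁿᵐ⁾), and for each i, the i-th block of the second-order Taylor model of f at x in direction d, namely f⁽ⁱ⁾(x) + J⁽ⁱ⁾(x)d + ½·[dᵀ𝓗(f⁽ⁱ⁾_r)(x)d]_{r=1,…,n_j} (with J⁽ⁱ⁾ the Jacobian block and 𝓗 the Hessians of the components), equals A·m̄⁽ⁱ⁾(d), where m̄⁽ⁱ⁾(d) = ½p_{ε²}⁽ⁱ⁾⊙d_ε^{⊙2} − d_ε⊙p_{εΔh}⁽ⁱ⁾⊙(AᵀC̄ᵀd_h⁽ⁱ⁾) + ½p_{Δh²}⁽ⁱ⁾⊙(AᵀC̄ᵀd_h⁽ⁱ⁾)^{⊙2}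 + p_ε⁽ⁱ⁾⊙d_ε − p_{Δh}⁽ⁱ⁾⊙(AᵀC̄ᵀd_h⁽ⁱ⁾) + diag(c_l)AᵀL⁻¹f⁽ⁱ⁾(x). Consequently, d solves the Tensor Equation f(x) + J(x)d + ½[dᵀ𝓗(f_r)(x)d]_r = 0 if and only if A·m̄⁽ⁱ⁾(d) = 0 for every i ∈ {1,…,n_m}. -/
open scoped Matrix

private lemma deriv_fst' (F : ℝ × ℝ → ℝ) (p : ℝ × ℝ) (hF : DifferentiableAt ℝ F p) :
    deriv (fun t => F (t, p.2)) p.1 = fderiv ℝ F p (1, 0) := by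
  have hi : HasDerivAt (fun t : ℝ => ((t, p.2) : ℝ × ℝ)) ((1:ℝ), (0:ℝ)) p.1 :=
    (hasDerivAt_id _).prodMk (hasDerivAt_const _ _)
  have h := hF.hasFDerivAt.comp_hasDerivAt p.1 hi
  exact h.deriv

private lemma deriv_snd' (F : ℝ × ℝ → ℝ) (p : ℝ × ℝ) (hF : DifferentiableAt ℝ F p) :
    deriv (fun t => F (p.1, t)) p.2 = fderiv ℝ F p (0, 1) := by
  have hi : HasDerivAt (fun t : ℝ => ((p.1, t) : ℝ × ℝ)) ((0:ℝ), (1:ℝ)) p.2 :=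
    (hasDerivAt_const _ _).prodMk (hasDerivAt_id _)
  have h := hF.hasFDerivAt.comp_hasDerivAt p.2 hi
  exact h.deriv

private lemma fderiv_two_partials (F : ℝ × ℝ → ℝ) (p : ℝ × ℝ) (hF : DifferentiableAt ℝ F p)
    (v : ℝ × ℝ) :
    fderiv ℝ F p v = v.1 * deriv (fun t => F (t, p.2)) p.1
      + v.2 * deriv (fun t => F (p.1, t)) p.2 := by
  rw [deriv_fst' F p hF, deriv_snd' F p hF]
  have hv : v = v.1 • ((1:ℝ), (0:ℝ)) + v.2 • ((0:ℝ), (1:ℝ)) := by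
    simp [Prod.ext_iff]
  conv_lhs => rw [hv]
  rw [map_add, map_smul, map_smul]
  simp [smul_eq_mul]

private lemma fderiv_apply_const' (F : ℝ × ℝ → ℝ) (hF : ContDiff ℝ 2 F) (p v w : ℝ × ℝ) :
    fderiv ℝ (fun y => fderiv ℝ F y v) p w = fderiv ℝ (fderiv ℝ F) p w v := by
  have hd : DifferentiableAt ℝ (fderiv ℝ F) p :=
    ((hF.fderiv_right (m := 1) (by norm_num)).differentiable one_ne_zero) p
  rw [fderiv_clm_apply hd (differentiableAt_const v)]
  simp

private lemma second_partials' (F : ℝ × ℝ → ℝ) (hF : ContDiff ℝ 2 F) (p : ℝ × ℝ) :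
    deriv (fun t => deriv (fun s => F (s, p.2)) t) p.1 = fderiv ℝ (fderiv ℝ F) p (1,0) (1,0)
  ∧ deriv (fun t => deriv (fun s => F (s, t)) p.1) p.2 = fderiv ℝ (fderiv ℝ F) p (0,1) (1,0)
  ∧ deriv (fun t => deriv (fun s => F (p.1, s)) t) p.2 = fderiv ℝ (fderiv ℝ F) p (0,1) (0,1) := by
  have hdF : Differentiable ℝ F := hF.differentiable (by norm_num)
  have h1 : ContDiff ℝ 1 (fderiv ℝ F) := hF.fderiv_right (by norm_num)
  have hP1 : Differentiable ℝ (fun y => fderiv ℝ F y ((1:ℝ),(0:ℝ))) :=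
    (h1.differentiable one_ne_zero).clm_apply (differentiable_const _)
  have hP2 : Differentiable ℝ (fun y => fderiv ℝ F y ((0:ℝ),(1:ℝ))) :=
    (h1.differentiable one_ne_zero).clm_apply (differentiable_const _)
  refine ⟨?_, ?_, ?_⟩
  · have e1 : (fun t => deriv (fun s => F (s, p.2)) t)
        = fun t => fderiv ℝ F (t, p.2) ((1:ℝ),(0:ℝ)) := by
      funext t; exact deriv_fst' F (t, p.2) (hdF _)
    rw [e1]
    exact (deriv_fst' (fun y => fderiv ℝ F y ((1:ℝ),(0:ℝ))) p (hP1 p)).trans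
      (fderiv_apply_const' F hF p (1,0) (1,0))
  · have e1 : (fun t => deriv (fun s => F (s, t)) p.1)
        = fun t => fderiv ℝ F (p.1, t) ((1:ℝ),(0:ℝ)) := by
      funext t; exact deriv_fst' F (p.1, t) (hdF _)
    rw [e1]
    exact (deriv_snd' (fun y => fderiv ℝ F y ((1:ℝ),(0:ℝ))) p (hP1 p)).trans
      (fderiv_apply_const' F hF p (1,0) (0,1))
  · have e1 : (fun t => deriv (fun s => F (p.1, s)) t)
        = fun t => fderiv ℝ F (p.1, t) ((0:ℝ),(1:ℝ)) := by
      funext t; exact deriv_snd' F (p.1, t) (hdF _)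
    rw [e1]
    exact (deriv_snd' (fun y => fderiv ℝ F y ((0:ℝ),(1:ℝ))) p (hP2 p)).trans
      (fderiv_apply_const' F hF p (0,1) (0,1))

private lemma second_quad' (F : ℝ × ℝ → ℝ) (hF : ContDiff ℝ 2 F) (p : ℝ × ℝ) (v : ℝ × ℝ) :
    fderiv ℝ (fderiv ℝ F) p v v
      = v.1 * v.1 * deriv (fun t => deriv (fun s => F (s, p.2)) t) p.1
      + 2 * (v.1 * v.2) * deriv (fun t => deriv (fun s => F (s, t)) p.1) p.2
      + v.2 * v.2 * deriv (fun t => deriv (fun s => F (p.1, s)) t) p.2 := by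
  obtain ⟨h11, h21, h22⟩ := second_partials' F hF p
  have hsymm : fderiv ℝ (fderiv ℝ F) p ((1:ℝ),(0:ℝ)) ((0:ℝ),(1:ℝ))
      = fderiv ℝ (fderiv ℝ F) p ((0:ℝ),(1:ℝ)) ((1:ℝ),(0:ℝ)) := by
    apply second_derivative_symmetric (f := F) (f' := fderiv ℝ F)
    · exact fun y => (hF.differentiable (by norm_num) y).hasFDerivAt
    · exact (((hF.fderiv_right (m := 1) (by norm_num)).differentiable one_ne_zero) p).hasFDerivAt
  have hv : v = v.1 • ((1:ℝ), (0:ℝ)) + v.2 • ((0:ℝ), (1:ℝ)) := by simp [Prod.ext_iff]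
  conv_lhs => rw [hv]
  simp only [map_add, map_smul, ContinuousLinearMap.add_apply, ContinuousLinearMap.coe_smul',
    Pi.smul_apply, smul_eq_mul]
  rw [hsymm, ← h11, ← h21, ← h22]
  ring

private noncomputable def tecLin {nj nl np nm : ℕ} (A : Matrix (Fin nj) (Fin nl) ℝ)
    (Cb : Matrix (Fin (nj - np)) (Fin nj) ℝ) (i : Fin nm) (j : Fin nl) :
    ((Fin nl → ℝ) × (Fin nm → Fin (nj - np) → ℝ)) →L[ℝ] ℝ × ℝ :=
  LinearMap.toContinuousLinearMap
  { toFun := fun y => (y.1 j, -(A.transpose.mulVec (Cb.transpose.mulVec (y.2 i)) j)),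
    map_add' := by
      intro y z
      have h2 : (y + z).2 i = y.2 i + z.2 i := rfl
      have h1 : (y + z).1 j = y.1 j + z.1 j := rfl
      simp [h1, h2, Matrix.mulVec_add, Prod.ext_iff]
      ring
    map_smul' := by
      intro c y
      have h2 : (c • y).2 i = c • (y.2 i) := rfl
      have h1 : (c • y).1 j = c * y.1 j := rfl
      simp [h1, h2, Matrix.mulVec_smul, Prod.ext_iff] }

private lemma tecLin_apply {nj nl np nm : ℕ} (A : Matrix (Fin nj) (Fin nl) ℝ)
    (Cb : Matrix (Fin (nj - np)) (Fin nj) ℝ) (i : Fin nm) (j : Fin nl)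
    (y : (Fin nl → ℝ) × (Fin nm → Fin (nj - np) → ℝ)) :
    tecLin A Cb i j y = (y.1 j, -(A.transpose.mulVec (Cb.transpose.mulVec (y.2 i)) j)) := rfl

private lemma mulVec_apply_sum {m n : ℕ} (A : Matrix (Fin m) (Fin n) ℝ) (v : Fin n → ℝ)
    (r : Fin m) : A.mulVec v r = ∑ j, A r j * v j := by
  simp [Matrix.mulVec, dotProduct]

/-- the second-order Taylor model (Tensor Equation) of the roughness
identification residual can be written blockwise as `A · m̄⁽ⁱ⁾(d)`, and consequently
`d` solves the Tensor Equation iff `A · m̄⁽ⁱ⁾(d) = 0` for all measurement sets `i`. -/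
theorem tensor_equation_compact_form
    (nj nl np nm : ℕ) (hnp : np ≤ nj)
    (A : Matrix (Fin nj) (Fin nl) ℝ)
    (Cb : Matrix (Fin (nj - np)) (Fin nj) ℝ)
    (q : Fin nl → ℝ → ℝ → ℝ)
    (hq : ∀ j, ContDiff ℝ 2 (fun p : ℝ × ℝ => q j p.1 p.2))
    (κ : Fin nm → Fin nl → ℝ) (qbar : Fin nm → Fin nj → ℝ)
    (cl : Fin nl → ℝ)
    (hL : IsUnit (A * Matrix.diagonal cl * A.transpose))
    -- head losses as a function of the variable x = (ε, h⁽¹⁾, …, h⁽ⁿᵐ⁾)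
    (Δh : Fin nm → ((Fin nl → ℝ) × (Fin nm → Fin (nj - np) → ℝ)) → Fin nl → ℝ)
    (hΔh : ∀ i x, Δh i x = κ i - A.transpose.mulVec (Cb.transpose.mulVec (x.2 i)))
    -- residual blocks f⁽ⁱ⁾
    (f : Fin nm → ((Fin nl → ℝ) × (Fin nm → Fin (nj - np) → ℝ)) → Fin nj → ℝ)
    (hf : ∀ i x, f i x = A.mulVec (fun j => q j (x.1 j) (Δh i x j)) - qbar i)
    -- the point x and the direction d
    (x d : (Fin nl → ℝ) × (Fin nm → Fin (nj - np) → ℝ))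
    -- first and second partial derivatives of the pipe flows, evaluated at (εⱼ, Δh⁽ⁱ⁾ⱼ)
    (pε pΔ pε2 pεΔ pΔ2 : Fin nm → Fin nl → ℝ)
    (hpε : ∀ i j, pε i j = deriv (fun t => q j t (Δh i x j)) (x.1 j))
    (hpΔ : ∀ i j, pΔ i j = deriv (fun t => q j (x.1 j) t) (Δh i x j))
    (hpε2 : ∀ i j, pε2 i j = deriv (fun t => deriv (fun s => q j s (Δh i x j)) t) (x.1 j))
    (hpεΔ : ∀ i j, pεΔ i j = deriv (fun t => deriv (fun s => q j s t) (x.1 j)) (Δh i x j))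
    (hpΔ2 : ∀ i j, pΔ2 i j = deriv (fun t => deriv (fun s => q j (x.1 j) s) t) (Δh i x j))
    -- u⁽ⁱ⁾ = Aᵀ C̄ᵀ d_h⁽ⁱ⁾
    (u : Fin nm → Fin nl → ℝ)
    (hu : ∀ i, u i = A.transpose.mulVec (Cb.transpose.mulVec (d.2 i)))
    -- the i-th block of the second-order Taylor model of f at x in direction d
    (T : Fin nm → Fin nj → ℝ)
    (hT : ∀ i, T i = fun r => f i x r + fderiv ℝ (f i) x d r
        + (1 / 2) * iteratedFDeriv ℝ 2 (fun y => f i y r) x ![d, d])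
    -- m̄⁽ⁱ⁾(d)
    (mbar : Fin nm → Fin nl → ℝ)
    (hmbar : ∀ i, mbar i =
        (1 / 2 : ℝ) • (pε2 i * d.1 * d.1)
        - d.1 * pεΔ i * u i
        + (1 / 2 : ℝ) • (pΔ2 i * u i * u i)
        + pε i * d.1
        - pΔ i * u i
        + (Matrix.diagonal cl).mulVec (A.transpose.mulVec
            ((A * Matrix.diagonal cl * A.transpose)⁻¹.mulVec (f i x)))) :
    (∀ i, T i = A.mulVec (mbar i)) ∧
      ((∀ i, T i = 0) ↔ ∀ i, A.mulVec (mbar i) = 0) := by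
  have hmain : ∀ i, T i = A.mulVec (mbar i) := by
    intro i
    have hQd : ∀ j : Fin nl, Differentiable ℝ (fun p : ℝ × ℝ => q j p.1 p.2) :=
      fun j => (hq j).differentiable (by norm_num)
    -- the affine inner maps and their derivatives
    have haff : ∀ (j : Fin nl) (y : (Fin nl → ℝ) × (Fin nm → Fin (nj - np) → ℝ)),
        HasFDerivAt (fun z : (Fin nl → ℝ) × (Fin nm → Fin (nj - np) → ℝ) =>
          ((z.1 j, Δh i z j) : ℝ × ℝ)) (tecLin A Cb i j) y := by
      intro j y
      have heq : (fun z : (Fin nl → ℝ) × (Fin nm → Fin (nj - np) → ℝ) =>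
          ((z.1 j, Δh i z j) : ℝ × ℝ)) = fun z => ((0:ℝ), κ i j) + tecLin A Cb i j z := by
        funext z
        rw [hΔh]
        simp [tecLin_apply, Prod.ext_iff]
        ring
      rw [heq]
      exact (tecLin A Cb i j).hasFDerivAt.const_add _
    -- derivative of the pipe-flow components
    have hφ : ∀ (j : Fin nl) (y : (Fin nl → ℝ) × (Fin nm → Fin (nj - np) → ℝ)),
        HasFDerivAt (fun z : (Fin nl → ℝ) × (Fin nm → Fin (nj - np) → ℝ) =>
            q j (z.1 j) (Δh i z j))
          ((fderiv ℝ (fun p : ℝ × ℝ => q j p.1 p.2) (y.1 j, Δh i y j)).comp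
            (tecLin A Cb i j)) y :=
      fun j y => ((hQd j _).hasFDerivAt).comp y (haff j y)
    -- sum form of the residual components
    have hfr : ∀ (y : (Fin nl → ℝ) × (Fin nm → Fin (nj - np) → ℝ)) (r : Fin nj),
        f i y r = (∑ j, A r j * q j (y.1 j) (Δh i y j)) - qbar i r := by
      intro y r
      rw [hf]
      simp only [Pi.sub_apply, mulVec_apply_sum]
    -- derivative of the r-th residual component
    have hg : ∀ (r : Fin nj) (y : (Fin nl → ℝ) × (Fin nm → Fin (nj - np) → ℝ)),
        HasFDerivAt (fun z => f i z r)
          (∑ j, A r j • ((fderiv ℝ (fun p : ℝ × ℝ => q j p.1 p.2) (y.1 j, Δh i y j)).comp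
            (tecLin A Cb i j))) y := by
      intro r y
      have heq : (fun z : (Fin nl → ℝ) × (Fin nm → Fin (nj - np) → ℝ) => f i z r)
          = fun z => (∑ j, A r j * q j (z.1 j) (Δh i z j)) - qbar i r := by
        funext z; exact hfr z r
      rw [heq]
      exact (HasFDerivAt.fun_sum (fun j _ => (hφ j y).const_mul (A r j))).sub_const _
    -- full derivative of f i
    have hFf : HasFDerivAt (f i) (ContinuousLinearMap.pi (fun r => ∑ j, A r j •
        ((fderiv ℝ (fun p : ℝ × ℝ => q j p.1 p.2) (x.1 j, Δh i x j)).comp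
          (tecLin A Cb i j)))) x :=
      hasFDerivAt_pi.2 (fun r => hg r x)
    -- the first-order term
    have hterm1 : ∀ r, fderiv ℝ (f i) x d r
        = ∑ j, A r j * (d.1 j * pε i j - u i j * pΔ i j) := by
      intro r
      rw [hFf.fderiv]
      simp only [ContinuousLinearMap.pi_apply, ContinuousLinearMap.sum_apply,
        ContinuousLinearMap.smul_apply, ContinuousLinearMap.comp_apply, smul_eq_mul]
      refine Finset.sum_congr rfl (fun j _ => ?_)
      have hv : tecLin A Cb i j d = ((d.1 j, -(u i j)) : ℝ × ℝ) := by
        rw [tecLin_apply, hu]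
      rw [hv]
      have h2 := fderiv_two_partials (fun p : ℝ × ℝ => q j p.1 p.2) (x.1 j, Δh i x j)
        (hQd j _) ((d.1 j, -(u i j)))
      simp only [] at h2
      rw [h2, ← hpε i j, ← hpΔ i j]
      ring
    -- the second-order term
    have hterm2 : ∀ r, iteratedFDeriv ℝ 2 (fun y => f i y r) x ![d, d]
        = ∑ j, A r j * (pε2 i j * d.1 j * d.1 j - 2 * (d.1 j * pεΔ i j * u i j)
            + pΔ2 i j * u i j * u i j) := by
      intro r
      rw [iteratedFDeriv_two_apply]
      have hm0 : (![d, d] : Fin 2 → (Fin nl → ℝ) × (Fin nm → Fin (nj - np) → ℝ)) 0 = d := rfl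
      have hm1 : (![d, d] : Fin 2 → (Fin nl → ℝ) × (Fin nm → Fin (nj - np) → ℝ)) 1 = d := rfl
      rw [hm0, hm1]
      have hg2 : ContDiff ℝ 2 (fun z : (Fin nl → ℝ) × (Fin nm → Fin (nj - np) → ℝ) =>
          f i z r) := by
        have heq : (fun z : (Fin nl → ℝ) × (Fin nm → Fin (nj - np) → ℝ) => f i z r)
            = fun z => (∑ j, A r j * q j (z.1 j) (Δh i z j)) - qbar i r := by
          funext z; exact hfr z r
        rw [heq]
        apply ContDiff.sub _ contDiff_const
        apply ContDiff.sum
        intro j _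
        apply ContDiff.mul contDiff_const
        have haffc : ContDiff ℝ 2 (fun z : (Fin nl → ℝ) × (Fin nm → Fin (nj - np) → ℝ) =>
            ((z.1 j, Δh i z j) : ℝ × ℝ)) := by
          have heq2 : (fun z : (Fin nl → ℝ) × (Fin nm → Fin (nj - np) → ℝ) =>
              ((z.1 j, Δh i z j) : ℝ × ℝ))
              = fun z => ((0:ℝ), κ i j) + tecLin A Cb i j z := by
            funext z; rw [hΔh]; simp [tecLin_apply, Prod.ext_iff]; ring
          rw [heq2]
          exact contDiff_const.add (tecLin A Cb i j).contDiff
        exact (hq j).comp haffc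
      have hdg : DifferentiableAt ℝ (fderiv ℝ (fun z => f i z r)) x :=
        ((hg2.fderiv_right (m := 1) (by norm_num)).differentiable one_ne_zero) x
      have hflip : fderiv ℝ (fderiv ℝ (fun z => f i z r)) x d d
          = fderiv ℝ (fun y => fderiv ℝ (fun z => f i z r) y d) x d := by
        rw [fderiv_clm_apply hdg (differentiableAt_const d)]
        simp
      rw [hflip]
      have hDg : (fun y => fderiv ℝ (fun z => f i z r) y d)
          = fun y => ∑ j, A r j *
              ((fderiv ℝ (fun p : ℝ × ℝ => q j p.1 p.2) (y.1 j, Δh i y j))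
                (tecLin A Cb i j d)) := by
        funext y
        rw [(hg r y).fderiv]
        simp [ContinuousLinearMap.sum_apply, ContinuousLinearMap.smul_apply,
          ContinuousLinearMap.comp_apply]
      rw [hDg]
      have hsum : HasFDerivAt (fun y : (Fin nl → ℝ) × (Fin nm → Fin (nj - np) → ℝ) =>
          ∑ j, A r j * ((fderiv ℝ (fun p : ℝ × ℝ => q j p.1 p.2) (y.1 j, Δh i y j))
            (tecLin A Cb i j d)))
          (∑ j, A r j • ((fderiv ℝ (fun p : ℝ × ℝ =>
              (fderiv ℝ (fun p' : ℝ × ℝ => q j p'.1 p'.2) p) (tecLin A Cb i j d))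
              (x.1 j, Δh i x j)).comp (tecLin A Cb i j))) x := by
        apply HasFDerivAt.fun_sum
        intro j _
        apply HasFDerivAt.const_mul
        have hPd : DifferentiableAt ℝ (fun p : ℝ × ℝ =>
            (fderiv ℝ (fun p' : ℝ × ℝ => q j p'.1 p'.2) p) (tecLin A Cb i j d))
            (x.1 j, Δh i x j) :=
          ((((hq j).fderiv_right (m := 1) (by norm_num)).differentiable one_ne_zero) _).clm_apply
            (differentiableAt_const _)
        exact hPd.hasFDerivAt.comp x (haff j x)
      rw [hsum.fderiv]
      simp only [ContinuousLinearMap.sum_apply, ContinuousLinearMap.smul_apply,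
        ContinuousLinearMap.comp_apply, smul_eq_mul]
      refine Finset.sum_congr rfl (fun j _ => ?_)
      have hv : tecLin A Cb i j d = ((d.1 j, -(u i j)) : ℝ × ℝ) := by
        rw [tecLin_apply, hu]
      rw [hv]
      have hBB := fderiv_apply_const' (fun p : ℝ × ℝ => q j p.1 p.2) (hq j)
        (x.1 j, Δh i x j) ((d.1 j, -(u i j))) ((d.1 j, -(u i j)))
      rw [hBB]
      have hQQ := second_quad' (fun p : ℝ × ℝ => q j p.1 p.2) (hq j)
        (x.1 j, Δh i x j) ((d.1 j, -(u i j)))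
      simp only [] at hQQ
      rw [hQQ, ← hpε2 i j, ← hpεΔ i j, ← hpΔ2 i j]
      ring
    -- the Newton-correction term reproduces f i x
    have hwv : A.mulVec ((Matrix.diagonal cl).mulVec (A.transpose.mulVec
        ((A * Matrix.diagonal cl * A.transpose)⁻¹.mulVec (f i x)))) = f i x := by
      rw [Matrix.mulVec_mulVec, Matrix.mulVec_mulVec, Matrix.mulVec_mulVec,
        Matrix.mul_nonsing_inv _ ((Matrix.isUnit_iff_isUnit_det _).mp hL),
        Matrix.one_mulVec]
    -- assembly
    funext r
    have hTr : T i r = f i x r + fderiv ℝ (f i) x d r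
        + (1 / 2) * iteratedFDeriv ℝ 2 (fun y => f i y r) x ![d, d] := by rw [hT i]
    rw [hTr, hterm1 r, hterm2 r]
    have hmb : A.mulVec (mbar i) r = (∑ j, A r j * ((1/2 : ℝ) * (pε2 i j * d.1 j * d.1 j)
        - d.1 j * pεΔ i j * u i j + (1/2 : ℝ) * (pΔ2 i j * u i j * u i j)
        + pε i j * d.1 j - pΔ i j * u i j)) + f i x r := by
      have h0 : A.mulVec (mbar i) r = ∑ j, A r j * mbar i j :=
        mulVec_apply_sum A (mbar i) r
      rw [h0]
      have hmj : ∀ j, mbar i j = ((1/2 : ℝ) * (pε2 i j * d.1 j * d.1 j)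
          - d.1 j * pεΔ i j * u i j + (1/2 : ℝ) * (pΔ2 i j * u i j * u i j)
          + pε i j * d.1 j - pΔ i j * u i j)
          + ((Matrix.diagonal cl).mulVec (A.transpose.mulVec
            ((A * Matrix.diagonal cl * A.transpose)⁻¹.mulVec (f i x)))) j := by
        intro j
        rw [hmbar i]
        simp [Pi.add_apply, Pi.sub_apply, Pi.mul_apply, Pi.smul_apply, smul_eq_mul]
        try ring
      have h1 : ∑ j, A r j * mbar i j
          = (∑ j, A r j * ((1/2 : ℝ) * (pε2 i j * d.1 j * d.1 j)
            - d.1 j * pεΔ i j * u i j + (1/2 : ℝ) * (pΔ2 i j * u i j * u i j)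
            + pε i j * d.1 j - pΔ i j * u i j))
          + ∑ j, A r j * ((Matrix.diagonal cl).mulVec (A.transpose.mulVec
            ((A * Matrix.diagonal cl * A.transpose)⁻¹.mulVec (f i x)))) j := by
        rw [← Finset.sum_add_distrib]
        refine Finset.sum_congr rfl (fun j _ => ?_)
        rw [hmj j]; ring
      rw [h1]
      congr 1
      have h2 : ∑ j, A r j * ((Matrix.diagonal cl).mulVec (A.transpose.mulVec
          ((A * Matrix.diagonal cl * A.transpose)⁻¹.mulVec (f i x)))) j
          = A.mulVec ((Matrix.diagonal cl).mulVec (A.transpose.mulVec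
            ((A * Matrix.diagonal cl * A.transpose)⁻¹.mulVec (f i x)))) r :=
        (mulVec_apply_sum A _ r).symm
      rw [h2]
      exact congrFun hwv r
    rw [hmb, Finset.mul_sum]
    have h3 : ∑ j, (A r j * (d.1 j * pε i j - u i j * pΔ i j)
        + (1/2 : ℝ) * (A r j * (pε2 i j * d.1 j * d.1 j - 2 * (d.1 j * pεΔ i j * u i j)
            + pΔ2 i j * u i j * u i j)))
        = ∑ j, A r j * ((1/2 : ℝ) * (pε2 i j * d.1 j * d.1 j)
            - d.1 j * pεΔ i j * u i j + (1/2 : ℝ) * (pΔ2 i j * u i j * u i j)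
            + pε i j * d.1 j - pΔ i j * u i j) := by
      refine Finset.sum_congr rfl (fun j _ => ?_)
      ring
    rw [add_assoc, ← Finset.sum_add_distrib, h3]
    exact add_comm _ _
  refine ⟨hmain, ?_⟩
  constructor
  · intro h i; rw [← hmain i]; exact h i
  · intro h i; rw [hmain i]; exact h i
end

section
/- Let n, m be natural numbers, let p₁, p₂, p₃, p₄, p₅, f₀ ∈ ℝⁿ, and let N be a real n×m matrix. For each component j define Δ_j = ½·det [[p₁ⱼ, −p₃ⱼ, p₄ⱼ], [−p₃ⱼ, p₂ⱼ, −p₅ⱼ], [p₄ⱼ, −p₅ⱼ, 2f₀ⱼ]] and ĥ_j = p₁ⱼ·p₂ⱼ − p₃ⱼ². If Δ_j = 0 and ĥ_j ≤ 0 for every j, then there exist complex vectors b, c, e, f̃, v, w ∈ ℂⁿ such that for all d_ε ∈ ℝⁿ and d_h ∈ ℝᵐ, writing u = N·d_h, the identity ½p₁⊙d_ε^{⊙2} − p₃⊙d_ε⊙u + ½p₂⊙u^{⊙2} + p₄⊙d_ε − p₅⊙u + f₀ = (b⊙d_ε + c⊙u + v) ⊙ (e⊙d_ε + f̃⊙u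 + w) holds in ℂⁿ (real vectors being coerced into ℂⁿ). -/
/-!
Over `ℂ`, `Δⱼ = 0` says that the ternary quadratic form with the displayed symmetric matrix is
degenerate, hence a product of two linear forms. Concretely, for the conic
`Q = a x² + 2b xy + c y² + 2d x + 2e y + f` with `a ≠ 0` one has
`a Q = (a x + b y + d)² - ((b² - a c) y² + 2 (b d - a e) y + (d² - a f))`, and the discriminant
of the subtracted quadratic in `y` is `-a det`, so it is a perfect square `(s y + r)²` and
`a Q` is a difference of two squares. The cases `a = 0` reduce to this by swapping `x` and `y`,
or are settled by hand when `a = c = 0`.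
-/

variable {K : Type*} [Field K]

def IsProductOfAffine (q : K → K → K) : Prop :=
  ∃ b c e f v w : K, ∀ x y, q x y = (b * x + c * y + v) * (e * x + f * y + w)

namespace IsProductOfAffine

variable {q : K → K → K}

lemma swap (h : IsProductOfAffine q) : IsProductOfAffine fun x y => q y x := by
  obtain ⟨b, c, e, f, v, w, h⟩ := h
  exact ⟨c, b, f, e, v, w, fun x y => (h y x).trans (by ring)⟩

lemma const_mul (h : IsProductOfAffine q) (k : K) : IsProductOfAffine fun x y => k * q x y := by
  obtain ⟨b, c, e, f, v, w, h⟩ := h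
  exact ⟨k * b, k * c, e, f, k * v, w, fun x y => (congrArg (k * ·) (h x y)).trans (by ring)⟩

end IsProductOfAffine

def conicForm (a b c d e f x y : K) : K :=
  a * x ^ 2 + 2 * b * x * y + c * y ^ 2 + 2 * d * x + 2 * e * y + f

lemma conicForm_swap (a b c d e f x y : K) :
    conicForm c b a e d f y x = conicForm a b c d e f x y := by
  unfold conicForm; ring

lemma det_symm_fin_three (a b c d e f : K) :
    (!![a, b, d; b, c, e; d, e, f]).det
      = a * c * f - a * e ^ 2 - b ^ 2 * f + 2 * b * d * e - c * d ^ 2 := by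
  simp [Matrix.det_fin_three]
  ring

lemma IsAlgClosed.exists_sq_sq_mul_eq [IsAlgClosed K] {α β γ : K} (h : β ^ 2 = α * γ) :
    ∃ s r : K, s ^ 2 = α ∧ r ^ 2 = γ ∧ s * r = β := by
  obtain ⟨s, hs⟩ := IsAlgClosed.exists_pow_nat_eq α two_pos
  by_cases hs0 : s = 0
  · obtain ⟨r, hr⟩ := IsAlgClosed.exists_pow_nat_eq γ two_pos
    have hβ : β = 0 := pow_eq_zero_iff two_ne_zero |>.mp (by rw [h, ← hs, hs0]; ring)
    exact ⟨s, r, hs, hr, by rw [hs0, hβ, zero_mul]⟩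
  · refine ⟨s, β / s, hs, ?_, by field_simp⟩
    field_simp
    rw [h, ← hs]

variable {a b c d e f : K}

lemma isProductOfAffine_conicForm_zero_zero
    (hdet : (!![0, b, d; b, 0, e; d, e, f]).det = 0) :
    IsProductOfAffine (conicForm 0 b 0 d e f) := by
  rw [det_symm_fin_three] at hdet
  by_cases hb : b = 0
  · exact ⟨2 * d, 2 * e, 0, 0, f, 1, fun x y => by unfold conicForm; rw [hb]; ring⟩
  · have hbf : b * f = 2 * d * e := mul_left_cancel₀ hb (by linear_combination -hdet)
    refine ⟨2, 0, 0, b, 2 * e / b, d, fun x y => ?_⟩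
    unfold conicForm
    field_simp
    linear_combination hbf

variable [IsAlgClosed K]

lemma isProductOfAffine_conicForm_of_ne_zero (ha : a ≠ 0)
    (hdet : (!![a, b, d; b, c, e; d, e, f]).det = 0) :
    IsProductOfAffine (conicForm a b c d e f) := by
  rw [det_symm_fin_three] at hdet
  obtain ⟨s, r, hs, hr, hsr⟩ := IsAlgClosed.exists_sq_sq_mul_eq
    (α := b ^ 2 - a * c) (β := b * d - a * e) (γ := d ^ 2 - a * f)
    (by linear_combination (-a) * hdet)
  refine ⟨1, (b - s) / a, a, b + s, (d - r) / a, d + r, fun x y => ?_⟩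
  unfold conicForm
  field_simp
  linear_combination y ^ 2 * hs + 2 * y * hsr + hr

theorem isProductOfAffine_conicForm (hdet : (!![a, b, d; b, c, e; d, e, f]).det = 0) :
    IsProductOfAffine (conicForm a b c d e f) := by
  by_cases ha : a = 0
  · subst ha
    by_cases hc : c = 0
    · subst hc
      exact isProductOfAffine_conicForm_zero_zero hdet
    · have hdet' : (!![c, b, e; b, 0, d; e, d, f]).det = 0 := by
        rw [det_symm_fin_three] at hdet ⊢; linear_combination hdet
      convert (isProductOfAffine_conicForm_of_ne_zero hc hdet').swap using 1
      funext x y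
      exact (conicForm_swap ..).symm
  · exact isProductOfAffine_conicForm_of_ne_zero ha hdet

theorem tensor_equation_hadamard_factorization_general
    {n m : ℕ} (p₁ p₂ p₃ p₄ p₅ f₀ : Fin n → ℝ) (N : Matrix (Fin n) (Fin m) ℝ)
    (hΔ : ∀ j, (1 / 2 : ℝ) * Matrix.det
        !![p₁ j, -p₃ j, p₄ j; -p₃ j, p₂ j, -p₅ j; p₄ j, -p₅ j, 2 * f₀ j] = 0) :
    ∃ b c e ft v w : Fin n → ℂ,
      ∀ (dε : Fin n → ℝ) (dh : Fin m → ℝ), ∀ j : Fin n,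
        ((1 / 2 : ℂ) * (p₁ j : ℂ) * (dε j : ℂ) ^ 2
            - (p₃ j : ℂ) * (dε j : ℂ) * ((N.mulVec dh) j : ℂ)
            + (1 / 2 : ℂ) * (p₂ j : ℂ) * ((N.mulVec dh) j : ℂ) ^ 2
            + (p₄ j : ℂ) * (dε j : ℂ)
            - (p₅ j : ℂ) * ((N.mulVec dh) j : ℂ)
            + (f₀ j : ℂ))
          = (b j * (dε j : ℂ) + c j * ((N.mulVec dh) j : ℂ) + v j)
            * (e j * (dε j : ℂ) + ft j * ((N.mulVec dh) j : ℂ) + w j) := by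
  have hfactor : ∀ j, IsProductOfAffine fun x y : ℂ =>
      (1 / 2 : ℂ) *
        conicForm (p₁ j : ℂ) (-p₃ j : ℝ) (p₂ j) (p₄ j) (-p₅ j : ℝ) (2 * f₀ j : ℝ) x y := by
    intro j
    refine (isProductOfAffine_conicForm ?_).const_mul _
    have hdet := hΔ j
    rw [det_symm_fin_three] at hdet ⊢
    exact_mod_cast (mul_eq_zero.mp hdet).resolve_left (by norm_num)
  choose b c e ft v w hfactor using hfactor
  refine ⟨b, c, e, ft, v, w, fun dε dh j => ?_⟩
  rw [← hfactor]
  unfold conicForm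
  push_cast
  ring

/-- if the degenerate-conic conditions `Δⱼ = 0` and `ĥⱼ ≤ 0` hold
componentwise, the quadratic vector expression of the Tensor Equation factorizes into
two linear factors connected via the Hadamard product (over ℂ). -/
theorem tensor_equation_hadamard_factorization
    {n m : ℕ} (p₁ p₂ p₃ p₄ p₅ f₀ : Fin n → ℝ) (N : Matrix (Fin n) (Fin m) ℝ)
    (hΔ : ∀ j, (1 / 2 : ℝ) * Matrix.det
        !![p₁ j, -p₃ j, p₄ j; -p₃ j, p₂ j, -p₅ j; p₄ j, -p₅ j, 2 * f₀ j] = 0)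
    (hhat : ∀ j, p₁ j * p₂ j - (p₃ j) ^ 2 ≤ 0) :
    ∃ b c e ft v w : Fin n → ℂ,
      ∀ (dε : Fin n → ℝ) (dh : Fin m → ℝ), ∀ j : Fin n,
        ((1 / 2 : ℂ) * (p₁ j : ℂ) * (dε j : ℂ) ^ 2
            - (p₃ j : ℂ) * (dε j : ℂ) * ((N.mulVec dh) j : ℂ)
            + (1 / 2 : ℂ) * (p₂ j : ℂ) * ((N.mulVec dh) j : ℂ) ^ 2
            + (p₄ j : ℂ) * (dε j : ℂ)
            - (p₅ j : ℂ) * ((N.mulVec dh) j : ℂ)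
            + (f₀ j : ℂ))
          = (b j * (dε j : ℂ) + c j * ((N.mulVec dh) j : ℂ) + v j)
            * (e j * (dε j : ℂ) + ft j * ((N.mulVec dh) j : ℂ) + w j) :=
  tensor_equation_hadamard_factorization_general p₁ p₂ p₃ p₄ p₅ f₀ N hΔ
end

section
/- Let n be a natural number and p₁, p₂, p₃, p₄, p₅, f₀ ∈ ℝⁿ. Suppose there exist complex vectors b, c, e, f̃, v, w ∈ ℂⁿ such that for all d_ε, u ∈ ℝⁿ the identity ½p₁⊙d_ε^{⊙2} − p₃⊙d_ε⊙u + ½p₂⊙u^{⊙2} + p₄⊙d_ε − p₅⊙u + f₀ = (b⊙d_ε + c⊙u + v) ⊙ (e⊙d_ε + f̃⊙u + w) holds in ℂⁿ. Then for every component j the determinant Δ_j = ½·det [[p₁ⱼ, −p₃ⱼ, p₄ⱼ], [−p₃ⱼ, p₂ⱼ, −p₅ⱼ], [p₄ⱼ, −p₅ⱼ, 2f₀ⱼ]] vanishes: Δ_j = 0. -/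
/-!
Writing the quadratic as `½ (x, y, 1) M (x, y, 1)ᵀ` with `M` symmetric, a factorization into
linear forms `ℓ · m` forces `M = ℓ mᵀ + m ℓᵀ`, a matrix of rank at most two, so `det M = 0`.
The entries of `M` are read off by evaluating the identity at six real points.
-/

open Matrix

theorem Matrix.det_vecMulVec_add_vecMulVec_fin_three {R : Type*} [CommRing R]
    (x y z w : Fin 3 → R) : (vecMulVec x y + vecMulVec z w).det = 0 := by
  simp only [det_fin_three, add_apply, vecMulVec_apply]
  ring

theorem matrix_eq_vecMulVec_add_vecMulVec_of_quadratic_eq_mul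
    {a b c d e f ℓ₀ ℓ₁ ℓ₂ m₀ m₁ m₂ : ℂ}
    (h : ∀ x y : ℝ, a / 2 * x ^ 2 + b * x * y + c / 2 * y ^ 2 + d * x + e * y + f
      = (ℓ₀ * x + ℓ₁ * y + ℓ₂) * (m₀ * x + m₁ * y + m₂)) :
    !![a, b, d; b, c, e; d, e, 2 * f]
      = vecMulVec ![ℓ₀, ℓ₁, ℓ₂] ![m₀, m₁, m₂] + vecMulVec ![m₀, m₁, m₂] ![ℓ₀, ℓ₁, ℓ₂] := by
  have h00 := h 0 0
  have h10 := h 1 0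
  have hm10 := h (-1) 0
  have h01 := h 0 1
  have h0m1 := h 0 (-1)
  have h11 := h 1 1
  push_cast at h00 h10 hm10 h01 h0m1 h11
  have hf : f = ℓ₂ * m₂ := by linear_combination h00
  have ha : a = 2 * ℓ₀ * m₀ := by linear_combination h10 + hm10 - 2 * h00
  have hc : c = 2 * ℓ₁ * m₁ := by linear_combination h01 + h0m1 - 2 * h00
  have hd : d = ℓ₀ * m₂ + ℓ₂ * m₀ := by linear_combination (h10 - hm10) / 2
  have he : e = ℓ₁ * m₂ + ℓ₂ * m₁ := by linear_combination (h01 - h0m1) / 2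
  have hb : b = ℓ₀ * m₁ + ℓ₁ * m₀ := by linear_combination h11 - h10 - h01 + h00
  subst ha hb hc hd he hf
  ext i k
  fin_cases i <;> fin_cases k <;> simp <;> ring

/-- if the quadratic vector expression of the Tensor Equation admits a
Hadamard factorization into two linear factors (over ℂ, for all real `dε` and `u`),
then the determinant `Δⱼ` vanishes in every component. -/
theorem hadamard_factorization_implies_det_zero
    {n : ℕ} (p₁ p₂ p₃ p₄ p₅ f₀ : Fin n → ℝ)
    (hfac : ∃ b c e ft v w : Fin n → ℂ,
      ∀ (dε u : Fin n → ℝ), ∀ j : Fin n,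
        ((1 / 2 : ℂ) * (p₁ j : ℂ) * (dε j : ℂ) ^ 2
            - (p₃ j : ℂ) * (dε j : ℂ) * (u j : ℂ)
            + (1 / 2 : ℂ) * (p₂ j : ℂ) * (u j : ℂ) ^ 2
            + (p₄ j : ℂ) * (dε j : ℂ)
            - (p₅ j : ℂ) * (u j : ℂ)
            + (f₀ j : ℂ))
          = (b j * (dε j : ℂ) + c j * (u j : ℂ) + v j)
            * (e j * (dε j : ℂ) + ft j * (u j : ℂ) + w j)) :
    ∀ j, (1 / 2 : ℝ) * Matrix.det
        !![p₁ j, -p₃ j, p₄ j; -p₃ j, p₂ j, -p₅ j; p₄ j, -p₅ j, 2 * f₀ j] = 0 := by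
  intro j
  obtain ⟨b, c, e, ft, v, w, h⟩ := hfac
  have hq : ∀ x y : ℝ, (p₁ j : ℂ) / 2 * x ^ 2 + (-p₃ j : ℂ) * x * y + (p₂ j : ℂ) / 2 * y ^ 2
      + (p₄ j : ℂ) * x + (-p₅ j : ℂ) * y + (f₀ j : ℂ)
      = (b j * x + c j * y + v j) * (e j * x + ft j * y + w j) := fun x y => by
    linear_combination h (fun _ => x) (fun _ => y) j
  refine mul_eq_zero_of_right _ (Complex.ofReal_injective ?_)
  rw [Complex.ofReal_zero, ← Complex.ofRealHom_eq_coe, RingHom.map_det,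
    ← det_vecMulVec_add_vecMulVec_fin_three ![b j, c j, v j] ![e j, ft j, w j] _ _,
    ← matrix_eq_vecMulVec_add_vecMulVec_of_quadratic_eq_mul hq]
  congr 1
  ext i k
  fin_cases i <;> fin_cases k <;> simp
end

section
/- Let a, h, b, f, g, c, A, B, C, D, E, F be complex numbers satisfying the coefficient-comparison system A·D = a, B·E = b, C·F = c, A·E + D·B = 2h, B·F + E·C = 2g, A·F + D·C = 2f (i.e. the conic a x² + 2h x y + b y² + 2f x + 2g y + c factors as (Ax + By + C)(Dx + Ey + F)). Then the determinant of the conic vanishes: abc + 2fgh − a g² − b f² − c h² = 0. -/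
/-!
With `u = (A, B, C)` and `v = (D, E, F)`, the factorization says that twice the symmetric matrix
of the conic is `u vᵀ + v uᵀ`. A sum of two rank-one matrices has rank at most two, so in
dimension three it is singular, and `Δ` is the determinant of that matrix.
-/

open Matrix

namespace Matrix

variable {m n R : Type*} [Fintype n] [CommRing R] [IsDomain R]

theorem rank_vecMulVec_add_vecMulVec_le (u w : m → R) (v x : n → R) :
    (vecMulVec u v + vecMulVec w x).rank ≤ 2 := by
  have hfactor : vecMulVec u v + vecMulVec w x = (of fun i k => ![u i, w i] k) * of ![v, x] := by
    ext i j
    simp [mul_apply, Fin.sum_univ_two, vecMulVec_apply]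
  rw [hfactor]
  exact (rank_mul_le_left _ _).trans ((rank_le_card_width _).trans_eq (Fintype.card_fin 2))

theorem det_vecMulVec_add_vecMulVec_eq_zero [DecidableEq n] (hn : 2 < Fintype.card n)
    (u v w x : n → R) : (vecMulVec u v + vecMulVec w x).det = 0 := by
  by_contra hdet
  have hrank := rank_vecMulVec_add_vecMulVec_le u w v x
  rw [rank_of_det_ne_zero hdet] at hrank
  omega

end Matrix

/-- if the coefficient-comparison system of a factorized conic is
consistent, then the determinant of the conic vanishes. -/
theorem conic_factorization_implies_det_zero
    (a h b f g c A B C D E F : ℂ)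
    (h₁ : A * D = a) (h₂ : B * E = b) (h₃ : C * F = c)
    (h₄ : A * E + D * B = 2 * h)
    (h₅ : B * F + E * C = 2 * g)
    (h₆ : A * F + D * C = 2 * f) :
    a * b * c + 2 * f * g * h - a * g ^ 2 - b * f ^ 2 - c * h ^ 2 = 0 := by
  have hsym : (2 : ℂ) • !![a, h, f; h, b, g; f, g, c] =
      vecMulVec ![A, B, C] ![D, E, F] + vecMulVec ![D, E, F] ![A, B, C] := by
    ext i j
    fin_cases i <;> fin_cases j <;> simp [← h₁, ← h₂, ← h₃, ← h₄, ← h₅, ← h₆] <;> ring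
  have hdet : (!![a, h, f; h, b, g; f, g, c]).det = 0 := by
    have hsum := det_vecMulVec_add_vecMulVec_eq_zero (by simp) ![A, B, C] ![D, E, F] ![D, E, F]
      ![A, B, C]
    rwa [← hsym, det_smul, mul_eq_zero, or_iff_right (by norm_num)] at hsum
  rw [← hdet, det_fin_three]
  simp only [Fin.isValue, of_apply, cons_val', cons_val_zero, cons_val_fin_one, cons_val_one,
    cons_val]
  ring
end

section
/- Let a, h, b, f, g, c be real numbers such that the determinant Δ = abc + 2fgh − ag² − bf² − ch² equals 0 and the sub-determinant ĥ = ab − h² satisfies ĥ ≤ 0. Then there exist complex numbers A, B, C, D, E, F such that for all real x and y: a x² + 2h x y + b y² + 2f x + 2g y + c = (Ax + By + C)(Dx + Ey + F). -/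
lemma complex_sqrt (z : ℂ) : ∃ w : ℂ, w ^ 2 = z :=
  IsAlgClosed.exists_pow_nat_eq z (n := 2) (by norm_num)

lemma conic_aux (a h b f g c α β x y : ℂ) (ha : a ≠ 0)
    (h1 : α^2 = h^2 - a*b) (h2 : α*β = h*f - a*g) (h3 : β^2 = f^2 - a*c) :
    a*x^2 + 2*h*x*y + b*y^2 + 2*f*x + 2*g*y + c
      = (a*x + (h+α)*y + (f+β)) * (1*x + ((h-α)/a)*y + (f-β)/a) := by
  apply mul_left_cancel₀ ha
  have hQ : a * (1*x + ((h-α)/a)*y + (f-β)/a) = a*x + (h-α)*y + (f-β) := by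
    field_simp
  calc a * (a*x^2 + 2*h*x*y + b*y^2 + 2*f*x + 2*g*y + c)
      = (a*x + (h+α)*y + (f+β)) * (a*x + (h-α)*y + (f-β)) := by
        linear_combination y^2*h1 + 2*y*h2 + h3
    _ = (a*x + (h+α)*y + (f+β)) * (a * (1*x + ((h-α)/a)*y + (f-β)/a)) := by rw [hQ]
    _ = a * ((a*x + (h+α)*y + (f+β)) * (1*x + ((h-α)/a)*y + (f-β)/a)) := by ring

/-- From `Δ = 0` and `a ≠ 0` produce the two auxiliary square roots. -/
lemma conic_roots (a h b f g c : ℂ) (ha : a ≠ 0)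
    (hΔ : a * b * c + 2 * f * g * h - a * g ^ 2 - b * f ^ 2 - c * h ^ 2 = 0) :
    ∃ α β : ℂ, α^2 = h^2 - a*b ∧ α*β = h*f - a*g ∧ β^2 = f^2 - a*c := by
  obtain ⟨α, hα⟩ := complex_sqrt (h^2 - a*b)
  have key : (h*f - a*g)^2 = (h^2 - a*b) * (f^2 - a*c) := by
    linear_combination (-a) * hΔ
  by_cases hα0 : α = 0
  · obtain ⟨β, hβ⟩ := complex_sqrt (f^2 - a*c)
    have h0 : h^2 - a*b = 0 := by rw [← hα, hα0]; ring
    have hfg : h*f - a*g = 0 := by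
      have : (h*f - a*g)^2 = 0 := by rw [key, h0]; ring
      exact pow_eq_zero_iff (by norm_num) |>.mp this
    exact ⟨α, β, hα, by rw [hα0, hfg]; ring, hβ⟩
  · refine ⟨α, (h*f - a*g)/α, hα, mul_div_cancel₀ _ hα0, ?_⟩
    rw [div_pow, key, ← hα]
    exact mul_div_cancel_left₀ _ (pow_ne_zero 2 hα0)

/-- a real conic with `Δ = 0` and `ĥ ≤ 0` factors into two (complex)
linear factors. -/
theorem degenerate_conic_factorization
    (a h b f g c : ℝ)
    (hΔ : a * b * c + 2 * f * g * h - a * g ^ 2 - b * f ^ 2 - c * h ^ 2 = 0)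
    (hhat : a * b - h ^ 2 ≤ 0) :
    ∃ A B C D E F : ℂ, ∀ x y : ℝ,
      ((a : ℂ) * (x : ℂ) ^ 2 + 2 * (h : ℂ) * (x : ℂ) * (y : ℂ) + (b : ℂ) * (y : ℂ) ^ 2
          + 2 * (f : ℂ) * (x : ℂ) + 2 * (g : ℂ) * (y : ℂ) + (c : ℂ))
        = (A * (x : ℂ) + B * (y : ℂ) + C) * (D * (x : ℂ) + E * (y : ℂ) + F) := by
  have hΔc : (a:ℂ) * b * c + 2 * f * g * h - a * g ^ 2 - b * f ^ 2 - c * h ^ 2 = 0 := by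
    exact_mod_cast hΔ
  by_cases ha : (a:ℂ) ≠ 0
  · obtain ⟨α, β, h1, h2, h3⟩ := conic_roots (a:ℂ) h b f g c ha hΔc
    refine ⟨a, h+α, f+β, 1, ((h:ℂ)-α)/a, ((f:ℂ)-β)/a, fun x y => ?_⟩
    exact conic_aux a h b f g c α β x y ha h1 h2 h3
  · push_neg at ha
    by_cases hb : (b:ℂ) ≠ 0
    · have hΔc' : (b:ℂ) * a * c + 2 * g * f * h - b * f ^ 2 - a * g ^ 2 - c * h ^ 2 = 0 := by
        linear_combination hΔc
      obtain ⟨α, β, h1, h2, h3⟩ := conic_roots (b:ℂ) h a g f c hb hΔc'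
      refine ⟨h+α, b, g+β, ((h:ℂ)-α)/b, 1, ((g:ℂ)-β)/b, fun x y => ?_⟩
      have := conic_aux b h a g f c α β y x hb h1 h2 h3
      linear_combination this
    · push_neg at hb
      by_cases hh : (h:ℂ) ≠ 0
      · have hch : (c:ℂ) * h = 2 * f * g := by
          apply mul_left_cancel₀ hh
          linear_combination -hΔc + ((b:ℂ)*c - (g:ℂ)^2)*ha + (-((f:ℂ)^2))*hb
        refine ⟨2*h, 0, 2*g, 0, 1, (f:ℂ)/h, fun x y => ?_⟩
        apply mul_left_cancel₀ hh
        have hQ : (h:ℂ) * ((0:ℂ)*x + 1*y + f/h) = h*y + f := by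
          field_simp; ring
        calc (h:ℂ) * ((a:ℂ)*x^2 + 2*h*x*y + b*y^2 + 2*f*x + 2*g*y + c)
            = (2*(h:ℂ)*x + 0*y + 2*g) * ((h:ℂ)*y + f) := by
              linear_combination ((h:ℂ)*(x:ℂ)^2)*ha + ((h:ℂ)*(y:ℂ)^2)*hb + hch
          _ = (2*(h:ℂ)*x + 0*y + 2*g) * ((h:ℂ) * ((0:ℂ)*x + 1*y + f/h)) := by rw [hQ]
          _ = (h:ℂ) * ((2*(h:ℂ)*x + 0*y + 2*g) * ((0:ℂ)*x + 1*y + (f:ℂ)/h)) := by ring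
      · push_neg at hh
        refine ⟨2*f, 2*g, c, 0, 0, 1, fun x y => ?_⟩
        linear_combination (x:ℂ)^2*ha + 2*(x:ℂ)*(y:ℂ)*hh + (y:ℂ)^2*hb
end

section
/- Let a, h, b, f, g, c be real numbers such that the determinant Δ = abc + 2fgh − ag² − bf² − ch² equals 0 and the sub-determinant ĥ = ab − h² is strictly positive. Then there exists exactly one pair (x, y) ∈ ℝ² satisfying a x² + 2h x y + b y² + 2f x + 2g y + c = 0 (the degenerate conic is a single point). -/
/-!
Completing the square around the centre `p₀ = ((gh - bf)/ĥ, (fh - ag)/ĥ)`, where the gradient of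
the conic vanishes, gives `𝔣(p) = q(p - p₀) + Δ/ĥ` with `q` the quadratic part
`a x² + 2h x y + b y²`. For `Δ = 0` the conic is therefore the zero set of `q(p - p₀)`, and `ĥ > 0`
makes `q` definite, so that zero set is `{p₀}`.
-/

theorem binaryQuadratic_eq_zero_iff {a h b : ℝ} (hhat : 0 < a * b - h ^ 2) (x y : ℝ) :
    a * x ^ 2 + 2 * h * x * y + b * y ^ 2 = 0 ↔ x = 0 ∧ y = 0 := by
  refine ⟨fun hq => ?_, fun ⟨hx, hy⟩ => by simp [hx, hy]⟩
  have ha : a ≠ 0 := by rintro rfl; nlinarith [sq_nonneg h]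
  have hsq : (a * x + h * y) ^ 2 + (a * b - h ^ 2) * y ^ 2 = 0 := by
    linear_combination a * hq
  have hy : y = 0 := by
    have : (a * b - h ^ 2) * y ^ 2 = 0 := by
      linarith [sq_nonneg (a * x + h * y), mul_nonneg hhat.le (sq_nonneg y)]
    simpa [hhat.ne'] using this
  subst hy
  exact ⟨by simpa [ha] using hsq, rfl⟩

theorem conic_eq_binaryQuadratic_sub_center_add {a h b f g c : ℝ} (hhat : a * b - h ^ 2 ≠ 0)
    (x y : ℝ) :
    a * x ^ 2 + 2 * h * x * y + b * y ^ 2 + 2 * f * x + 2 * g * y + c =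
      a * (x - (g * h - b * f) / (a * b - h ^ 2)) ^ 2
        + 2 * h * (x - (g * h - b * f) / (a * b - h ^ 2)) * (y - (f * h - a * g) / (a * b - h ^ 2))
        + b * (y - (f * h - a * g) / (a * b - h ^ 2)) ^ 2
        + (a * b * c + 2 * f * g * h - a * g ^ 2 - b * f ^ 2 - c * h ^ 2) / (a * b - h ^ 2) := by
  field_simp
  ring

/-- a degenerate conic (`Δ = 0`) with positive sub-determinant
(`ĥ > 0`) is a single point: exactly one `(x, y)` satisfies the conic equation. -/
theorem degenerate_conic_single_point
    (a h b f g c : ℝ)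
    (hΔ : a * b * c + 2 * f * g * h - a * g ^ 2 - b * f ^ 2 - c * h ^ 2 = 0)
    (hhat : 0 < a * b - h ^ 2) :
    ∃! p : ℝ × ℝ,
      a * p.1 ^ 2 + 2 * h * p.1 * p.2 + b * p.2 ^ 2 + 2 * f * p.1 + 2 * g * p.2 + c = 0 := by
  set center : ℝ × ℝ := ((g * h - b * f) / (a * b - h ^ 2), (f * h - a * g) / (a * b - h ^ 2))
  have h_iff : ∀ p : ℝ × ℝ,
      a * p.1 ^ 2 + 2 * h * p.1 * p.2 + b * p.2 ^ 2 + 2 * f * p.1 + 2 * g * p.2 + c = 0 ↔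
        p = center := by
    rintro ⟨x, y⟩
    rw [conic_eq_binaryQuadratic_sub_center_add hhat.ne', hΔ, zero_div, add_zero,
      binaryQuadratic_eq_zero_iff hhat, sub_eq_zero, sub_eq_zero, Prod.ext_iff]
  exact ⟨center, (h_iff center).2 rfl, fun p hp => (h_iff p).1 hp⟩
end

section
/- Let a, h, b, f, g, c be real numbers. There exist real numbers A, B, C, D, E, F such that for all real x and y: a x² + 2h x y + b y² + 2f x + 2g y + c = (Ax + By + C)(Dx + Ey + F), if and only if Δ = 0 and either ĥ < 0, or ĥ = 0 together with f² + g² ≥ c(a + b), where Δ = abc + 2fgh − ag² − bf² − ch² and ĥ = ab − h². -/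
lemma psq (α β γ : ℝ) (hα : 0 ≤ α) (hγ : 0 ≤ γ) (hβ : β^2 = α*γ) :
    ∃ p q : ℝ, p^2 = α ∧ q^2 = γ ∧ p*q = β := by
  rcases eq_or_lt_of_le hα with h0 | h0
  · have hb0 : β = 0 := by nlinarith [sq_nonneg β]
    exact ⟨0, Real.sqrt γ, by simp [← h0], Real.sq_sqrt hγ, by simp [hb0]⟩
  · have hs : Real.sqrt α ≠ 0 := by positivity
    refine ⟨Real.sqrt α, β / Real.sqrt α, Real.sq_sqrt hα, ?_, ?_⟩
    · field_simp
      linear_combination hβ - γ * Real.sq_sqrt hα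
    · field_simp

lemma factor_a (a h b f g c p q : ℝ) (ha : a ≠ 0)
    (hp : p^2 = h^2 - a*b) (hq : q^2 = f^2 - a*c) (hpq : p*q = h*f - a*g) :
    ∀ x y : ℝ, a*x^2+2*h*x*y+b*y^2+2*f*x+2*g*y+c
      = (1*x + (h+p)/a*y + (f+q)/a) * (a*x + (h-p)*y + (f-q)) := by
  intro x y
  field_simp
  ring_nf
  linear_combination (y^2)*hp + (2*y)*hpq + hq

lemma conic_factor_ne (a h b f g c : ℝ) (ha : a ≠ 0)
    (hΔ : a*b*c + 2*f*g*h - a*g^2 - b*f^2 - c*h^2 = 0)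
    (hcase : a*b - h^2 < 0 ∨ (a*b - h^2 = 0 ∧ f^2 + g^2 ≥ c*(a+b))) :
    ∃ A B C D E F : ℝ, ∀ x y : ℝ,
      a*x^2+2*h*x*y+b*y^2+2*f*x+2*g*y+c = (A*x+B*y+C)*(D*x+E*y+F) := by
  have hβ2 : (h*f - a*g)^2 = (h^2 - a*b)*(f^2 - a*c) := by linear_combination (-a)*hΔ
  have hα : 0 ≤ h^2 - a*b := by rcases hcase with h1|⟨h1,_⟩ <;> nlinarith [h1]
  have hγ : 0 ≤ f^2 - a*c := by
    rcases hcase with h1|⟨h1,h2⟩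
    · nlinarith [sq_nonneg (h*f - a*g)]
    · have h3 : (h*f - a*g)^2 = 0 := by linear_combination hβ2 - (f^2-a*c)*h1
      have hβ : h*f - a*g = 0 := by
        have := sq_eq_zero_iff.mp h3
        exact this
      have key : (f^2 - a*c)*(a^2+h^2) = a^2*(f^2+g^2 - c*(a+b)) := by
        linear_combination (h*f+a*g)*hβ + (a*c)*h1
      have hpos : 0 < a^2 + h^2 := by positivity
      nlinarith [key, h2, hpos]
  obtain ⟨p,q,hp,hq,hpq⟩ := psq _ _ _ hα hγ hβ2
  exact ⟨1, (h+p)/a, (f+q)/a, a, h-p, f-q, factor_a a h b f g c p q ha hp hq hpq⟩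

/-- a real conic factors into two real linear factors iff `Δ = 0` and
either `ĥ < 0`, or `ĥ = 0` together with `f² + g² ≥ c(a+b)`. -/
theorem real_conic_factorization_iff
    (a h b f g c : ℝ) :
    (∃ A B C D E F : ℝ, ∀ x y : ℝ,
        a * x ^ 2 + 2 * h * x * y + b * y ^ 2 + 2 * f * x + 2 * g * y + c
          = (A * x + B * y + C) * (D * x + E * y + F))
      ↔ (a * b * c + 2 * f * g * h - a * g ^ 2 - b * f ^ 2 - c * h ^ 2 = 0 ∧
          (a * b - h ^ 2 < 0 ∨
            (a * b - h ^ 2 = 0 ∧ f ^ 2 + g ^ 2 ≥ c * (a + b)))) := by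
  constructor
  · rintro ⟨A,B,C,D,E,F,hfac⟩
    have e00 := hfac 0 0
    have e10 := hfac 1 0
    have em0 := hfac (-1) 0
    have e01 := hfac 0 1
    have e0m := hfac 0 (-1)
    have e11 := hfac 1 1
    have hc : c = C*F := by linear_combination e00
    have ha : a = A*D := by linear_combination e10/2 + em0/2 - e00
    have hf : f = (A*F+C*D)/2 := by linear_combination e10/4 - em0/4
    have hb : b = B*E := by linear_combination e01/2 + e0m/2 - e00
    have hg : g = (B*F+C*E)/2 := by linear_combination e01/4 - e0m/4
    have hh : h = (A*E+B*D)/2 := by linear_combination e11/2 - e10/2 - e01/2 + e00/2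
    subst hc ha hf hb hg hh
    refine ⟨by ring, ?_⟩
    rcases eq_or_ne (A*E - B*D) 0 with h0 | h0
    · right
      constructor
      · linear_combination (-(A*E-B*D)/4)*h0
      · nlinarith [sq_nonneg (A*F - C*D), sq_nonneg (B*F - C*E)]
    · left
      have hpos : 0 < (A*E - B*D)^2 := by positivity
      nlinarith [hpos]
  · rintro ⟨hΔ, hcase⟩
    rcases eq_or_ne a 0 with ha0 | ha0
    · subst ha0
      rcases eq_or_ne b 0 with hb0 | hb0
      · subst hb0
        rcases eq_or_ne h 0 with hh0 | hh0
        · subst hh0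
          exact ⟨2*f, 2*g, c, 0, 0, 1, by intro x y; ring⟩
        · have hch : c*h = 2*f*g := by
            have h1 : h*(2*f*g - c*h) = 0 := by linear_combination hΔ
            rcases mul_eq_zero.mp h1 with h2|h2
            · exact absurd h2 hh0
            · linarith
          refine ⟨2*h, 0, 2*g, 0, 1, f/h, ?_⟩
          intro x y
          field_simp
          linear_combination hch
      · have hΔ' : b*0*c + 2*g*f*h - b*f^2 - 0*g^2 - c*h^2 = 0 := by linear_combination hΔ
        have hcase' : b*0 - h^2 < 0 ∨ (b*0 - h^2 = 0 ∧ g^2 + f^2 ≥ c*(b+0)) := by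
          rcases hcase with h1|⟨h1,h2⟩
          · left; nlinarith [h1]
          · right; exact ⟨by linear_combination h1, by nlinarith [h2]⟩
        obtain ⟨A,B,C,D,E,F,hfac⟩ := conic_factor_ne b h 0 g f c hb0 hΔ' hcase'
        exact ⟨B,A,C,E,D,F, fun x y => by linear_combination hfac y x⟩
    · exact conic_factor_ne a h b f g c ha0 hΔ hcase
end

section
/- Let R be an integral domain, σ a type of variables, and let p, q, r be multivariate polynomials over R in the variables σ with p = q·r and p ≠ 0. If p is homogeneous of degree n, then q and r are homogeneous: there exist natural numbers d₁ and d₂ with d₁ + d₂ = n such that q is homogeneous of degree d₁ and r is homogeneous of degree d₂. -/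
set_option maxHeartbeats 1000000
open MvPolynomial

private lemma Finsupp.degree_add' {σ : Type*} (a b : σ →₀ ℕ) :
    (a + b).degree = a.degree + b.degree := by
  simp [Finsupp.degree_eq_weight_one, map_add]

/-- coefficient of a product at a uniquely decomposable exponent -/
private lemma coeff_mul_eq_of_unique {σ R : Type*} [CommSemiring R]
    (q r : MvPolynomial σ R) (u v : σ →₀ ℕ)
    (h : ∀ x ∈ q.support, ∀ y ∈ r.support, x + y = u + v → x = u ∧ y = v) :
    MvPolynomial.coeff (u + v) (q * r) = MvPolynomial.coeff u q * MvPolynomial.coeff v r := by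
  classical
  rw [MvPolynomial.coeff_mul]
  apply Finset.sum_eq_single (u, v)
  · rintro ⟨x, y⟩ hxy hne
    rw [Finset.HasAntidiagonal.mem_antidiagonal] at hxy
    by_contra hc
    have hx : x ∈ q.support := by
      rw [MvPolynomial.mem_support_iff]
      intro h0; apply hc; rw [h0, zero_mul]
    have hy : y ∈ r.support := by
      rw [MvPolynomial.mem_support_iff]
      intro h0; apply hc; rw [h0, mul_zero]
    obtain ⟨h1, h2⟩ := h x hx y hy hxy
    exact hne (by rw [h1, h2])
  · intro h'
    simp [Finset.HasAntidiagonal.mem_antidiagonal] at h'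

section Extremal

variable {σ R : Type*} [CommSemiring R] [LinearOrder σ]

private noncomputable def phiMeasure (d : σ →₀ ℕ) : Lex (ℕ × Lex (σ →₀ ℕ)) :=
  toLex (d.degree, toLex d)

private lemma phi_min_unique {q r : MvPolynomial σ R} {u v : σ →₀ ℕ}
    (hu : ∀ x ∈ q.support, phiMeasure u ≤ phiMeasure x)
    (hv : ∀ y ∈ r.support, phiMeasure v ≤ phiMeasure y) :
    ∀ x ∈ q.support, ∀ y ∈ r.support, x + y = u + v → x = u ∧ y = v := by
  intro x hx y hy hxy
  have hux : u.degree < x.degree ∨ u.degree = x.degree ∧ (toLex u : Lex (σ →₀ ℕ)) ≤ toLex x :=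
    Prod.Lex.le_iff.mp (hu x hx)
  have hvy : v.degree < y.degree ∨ v.degree = y.degree ∧ (toLex v : Lex (σ →₀ ℕ)) ≤ toLex y :=
    Prod.Lex.le_iff.mp (hv y hy)
  have hdeg : x.degree + y.degree = u.degree + v.degree := by
    rw [← Finsupp.degree_add', hxy, Finsupp.degree_add']
  have hdx : u.degree ≤ x.degree := by
    rcases hux with h | ⟨h, -⟩
    · exact le_of_lt h
    · exact le_of_eq h
  have hdy : v.degree ≤ y.degree := by
    rcases hvy with h | ⟨h, -⟩
    · exact le_of_lt h
    · exact le_of_eq h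
  have hdx' : u.degree = x.degree := by omega
  have hdy' : v.degree = y.degree := by omega
  have hlx : (toLex u : Lex (σ →₀ ℕ)) ≤ toLex x := by
    rcases hux with h | ⟨-, h⟩
    · omega
    · exact h
  have hly : (toLex v : Lex (σ →₀ ℕ)) ≤ toLex y := by
    rcases hvy with h | ⟨-, h⟩
    · omega
    · exact h
  have hsum : (toLex x : Lex (σ →₀ ℕ)) + toLex y = toLex u + toLex v := by
    show toLex (x + y) = toLex (u + v)
    rw [hxy]
  have hxu : (toLex u : Lex (σ →₀ ℕ)) = toLex x := by
    by_contra hne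
    have hlt : (toLex u : Lex (σ →₀ ℕ)) < toLex x := lt_of_le_of_ne hlx hne
    have : (toLex u : Lex (σ →₀ ℕ)) + toLex v < toLex x + toLex y :=
      add_lt_add_of_lt_of_le hlt hly
    rw [hsum] at this
    exact absurd this (lt_irrefl _)
  have hx' : x = u := toLex.injective hxu.symm
  refine ⟨hx', ?_⟩
  subst hx'
  exact add_left_cancel hxy

private lemma phi_max_unique {q r : MvPolynomial σ R} {u v : σ →₀ ℕ}
    (hu : ∀ x ∈ q.support, phiMeasure x ≤ phiMeasure u)
    (hv : ∀ y ∈ r.support, phiMeasure y ≤ phiMeasure v) :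
    ∀ x ∈ q.support, ∀ y ∈ r.support, x + y = u + v → x = u ∧ y = v := by
  intro x hx y hy hxy
  have hux : x.degree < u.degree ∨ x.degree = u.degree ∧ (toLex x : Lex (σ →₀ ℕ)) ≤ toLex u :=
    Prod.Lex.le_iff.mp (hu x hx)
  have hvy : y.degree < v.degree ∨ y.degree = v.degree ∧ (toLex y : Lex (σ →₀ ℕ)) ≤ toLex v :=
    Prod.Lex.le_iff.mp (hv y hy)
  have hdeg : x.degree + y.degree = u.degree + v.degree := by
    rw [← Finsupp.degree_add', hxy, Finsupp.degree_add']
  have hdx : x.degree ≤ u.degree := by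
    rcases hux with h | ⟨h, -⟩
    · exact le_of_lt h
    · exact le_of_eq h
  have hdy : y.degree ≤ v.degree := by
    rcases hvy with h | ⟨h, -⟩
    · exact le_of_lt h
    · exact le_of_eq h
  have hdx' : x.degree = u.degree := by omega
  have hdy' : y.degree = v.degree := by omega
  have hlx : (toLex x : Lex (σ →₀ ℕ)) ≤ toLex u := by
    rcases hux with h | ⟨-, h⟩
    · omega
    · exact h
  have hly : (toLex y : Lex (σ →₀ ℕ)) ≤ toLex v := by
    rcases hvy with h | ⟨-, h⟩
    · omega
    · exact h
  have hsum : (toLex x : Lex (σ →₀ ℕ)) + toLex y = toLex u + toLex v := by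
    show toLex (x + y) = toLex (u + v)
    rw [hxy]
  have hxu : (toLex x : Lex (σ →₀ ℕ)) = toLex u := by
    by_contra hne
    have hlt : (toLex x : Lex (σ →₀ ℕ)) < toLex u := lt_of_le_of_ne hlx hne
    have : (toLex x : Lex (σ →₀ ℕ)) + toLex y < toLex u + toLex v :=
      add_lt_add_of_lt_of_le hlt hly
    rw [← hsum] at this
    exact absurd this (lt_irrefl _)
  have hx' : x = u := toLex.injective hxu
  refine ⟨hx', ?_⟩
  subst hx'
  exact add_left_cancel hxy

end Extremal

/-- over an integral domain, the factors of a nonzero homogeneous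
multivariate polynomial are homogeneous, with degrees adding up to the total degree. -/
theorem isHomogeneous_of_factor_of_isHomogeneous
    {R : Type*} [CommRing R] [IsDomain R] {σ : Type*}
    (p q r : MvPolynomial σ R) (n : ℕ)
    (hpqr : p = q * r) (hp : p ≠ 0)
    (hhom : p.IsHomogeneous n) :
    ∃ d₁ d₂ : ℕ, d₁ + d₂ = n ∧ q.IsHomogeneous d₁ ∧ r.IsHomogeneous d₂ := by
  classical
  letI : LinearOrder σ := linearOrderOfSTO WellOrderingRel
  have hq : q ≠ 0 := by rintro rfl; rw [zero_mul] at hpqr; exact hp hpqr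
  have hr : r ≠ 0 := by rintro rfl; rw [mul_zero] at hpqr; exact hp hpqr
  have hqs : q.support.Nonempty := MvPolynomial.support_nonempty.mpr hq
  have hrs : r.support.Nonempty := MvPolynomial.support_nonempty.mpr hr
  obtain ⟨u₁, hu₁, hu₁min⟩ := Finset.exists_min_image q.support phiMeasure hqs
  obtain ⟨v₁, hv₁, hv₁min⟩ := Finset.exists_min_image r.support phiMeasure hrs
  obtain ⟨u₂, hu₂, hu₂max⟩ := Finset.exists_max_image q.support phiMeasure hqs
  obtain ⟨v₂, hv₂, hv₂max⟩ := Finset.exists_max_image r.support phiMeasure hrs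
  have hcmin : MvPolynomial.coeff (u₁ + v₁) p =
      MvPolynomial.coeff u₁ q * MvPolynomial.coeff v₁ r := by
    rw [hpqr]; exact coeff_mul_eq_of_unique q r u₁ v₁ (phi_min_unique hu₁min hv₁min)
  have hcmax : MvPolynomial.coeff (u₂ + v₂) p =
      MvPolynomial.coeff u₂ q * MvPolynomial.coeff v₂ r := by
    rw [hpqr]; exact coeff_mul_eq_of_unique q r u₂ v₂ (phi_max_unique hu₂max hv₂max)
  have hmin_ne : MvPolynomial.coeff (u₁ + v₁) p ≠ 0 := by
    rw [hcmin]
    exact mul_ne_zero (MvPolynomial.mem_support_iff.mp hu₁) (MvPolynomial.mem_support_iff.mp hv₁)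
  have hmax_ne : MvPolynomial.coeff (u₂ + v₂) p ≠ 0 := by
    rw [hcmax]
    exact mul_ne_zero (MvPolynomial.mem_support_iff.mp hu₂) (MvPolynomial.mem_support_iff.mp hv₂)
  have hwmin : (u₁ + v₁).degree = n := by
    rw [Finsupp.degree_eq_weight_one]; exact hhom hmin_ne
  have hwmax : (u₂ + v₂).degree = n := by
    rw [Finsupp.degree_eq_weight_one]; exact hhom hmax_ne
  rw [Finsupp.degree_add'] at hwmin hwmax
  -- degree bounds for support elements
  have hqdeg : ∀ x ∈ q.support, u₁.degree ≤ x.degree ∧ x.degree ≤ u₂.degree := by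
    intro x hx
    constructor
    · rcases Prod.Lex.le_iff.mp (hu₁min x hx) with h | ⟨h, -⟩
      · exact le_of_lt h
      · exact le_of_eq h
    · rcases Prod.Lex.le_iff.mp (hu₂max x hx) with h | ⟨h, -⟩
      · exact le_of_lt h
      · exact le_of_eq h
  have hrdeg : ∀ y ∈ r.support, v₁.degree ≤ y.degree ∧ y.degree ≤ v₂.degree := by
    intro y hy
    constructor
    · rcases Prod.Lex.le_iff.mp (hv₁min y hy) with h | ⟨h, -⟩
      · exact le_of_lt h
      · exact le_of_eq h
    · rcases Prod.Lex.le_iff.mp (hv₂max y hy) with h | ⟨h, -⟩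
      · exact le_of_lt h
      · exact le_of_eq h
  have hd1 : u₁.degree = u₂.degree := by
    have h1 := (hqdeg u₁ hu₁).1
    have h2 := (hqdeg u₂ hu₂).1
    have h3 := (hrdeg v₁ hv₁).1
    have h4 := (hrdeg v₂ hv₂).1
    omega
  have hd2 : v₁.degree = v₂.degree := by
    have h1 := (hqdeg u₂ hu₂).2
    have h3 := (hrdeg v₁ hv₁).2
    omega
  refine ⟨u₁.degree, v₁.degree, hwmin, ?_, ?_⟩
  · intro d hd
    have hds : d ∈ q.support := MvPolynomial.mem_support_iff.mpr hd
    have := hqdeg d hds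
    rw [Pi.one_def, ← Finsupp.degree_eq_weight_one]
    omega
  · intro d hd
    have hds : d ∈ r.support := MvPolynomial.mem_support_iff.mpr hd
    have := hrdeg d hds
    rw [Pi.one_def, ← Finsupp.degree_eq_weight_one]
    omega
end
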